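/- Let G be a finite subgroup of the orthogonal group O(N,ℝ) acting on ℝᴺ, let f : ℝᴺ → ℝ be a differentiable G-invariant function (f(g·x) = f(x) for all g ∈ G, x ∈ ℝᴺ), and let H be a subgroup of G with fixed subspace V^H = {x ∈ ℝᴺ : h·x = x for all h ∈ H}. If x ∈ V^H and the derivative of f at x vanishes on V^H (i.e., Df(x)(v) = 0 for all v ∈ V^H), then Df(x) = 0, so x is a critical point of f on all of ℝᴺ. -/

import Mathlib

open Matrix

/-!
Each `h ∈ H` acts by an invertible linear map fixing `x` and preserving `f`, so
`Df(x) ∘ h = Df(x)` (invertibility makes this hold even where `f` is not differentiable).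
Applying `Df(x)` to the orbit sum `∑_{h ∈ H} h v` therefore gives `|H| · Df(x) v`. The orbit sum
lies in `V^H`, because left translation by an element of `H` permutes the finite multiplicatively
closed set `H`, so this value is `0`.
-/

/-- The linear action of a real `N × N` matrix on Euclidean space `ℝᴺ`. -/
noncomputable def actR {N : ℕ} (g : Matrix (Fin N) (Fin N) ℝ) (x : EuclideanSpace ℝ (Fin N)) :
    EuclideanSpace ℝ (Fin N) :=
  WithLp.toLp 2 (fun i => ∑ j, g i j * x j)

theorem Finset.sum_comp_mul_left_of_mulClosed {M β : Type*} [Mul M] [AddCommMonoid β]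
    {s : Finset M} (hs : ∀ a ∈ s, ∀ b ∈ s, a * b ∈ s) {a : M} (ha : a ∈ s)
    (hinj : Function.Injective (a * ·)) (F : M → β) :
    ∑ g ∈ s, F (a * g) = ∑ g ∈ s, F g := by
  have hmaps : Set.MapsTo (a * ·) s s := fun g hg => hs a ha g hg
  have hbij := (s.finite_toSet.injOn_iff_bijOn_of_mapsTo hmaps).mp hinj.injOn
  exact Finset.sum_nbij (a * ·) hmaps hinj.injOn hbij.surjOn fun _ _ => rfl

section Averaging

variable {𝕜 E F M : Type*} [NontriviallyNormedField 𝕜]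
  [NormedAddCommGroup E] [NormedSpace 𝕜 E] [NormedAddCommGroup F] [NormedSpace 𝕜 F]
  [Monoid M] (ρ : M →* (E →L[𝕜] E)) {s : Finset M}

theorem apply_sum_apply_eq_of_mulClosed (hs : ∀ a ∈ s, ∀ b ∈ s, a * b ∈ s)
    (hunit : ∀ a ∈ s, IsUnit a) {a : M} (ha : a ∈ s) (v : E) :
    ρ a (∑ g ∈ s, ρ g v) = ∑ g ∈ s, ρ g v := by
  rw [map_sum]
  simp_rw [← ContinuousLinearMap.comp_apply, ← ContinuousLinearMap.mul_def, ← map_mul]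
  exact Finset.sum_comp_mul_left_of_mulClosed hs ha (hunit a ha).mul_right_injective (ρ · v)

theorem ContinuousLinearMap.eq_zero_of_comp_eq_of_eq_zero_on_fixed [CharZero 𝕜]
    (hne : s.Nonempty) (hs : ∀ a ∈ s, ∀ b ∈ s, a * b ∈ s) (hunit : ∀ a ∈ s, IsUnit a)
    {φ : E →L[𝕜] F}
    (hφ : ∀ a ∈ s, φ.comp (ρ a) = φ) (hfix : ∀ v, (∀ a ∈ s, ρ a v = v) → φ v = 0) :
    φ = 0 := by
  ext v
  have hsum : φ (∑ g ∈ s, ρ g v) = (s.card : 𝕜) • φ v := by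
    rw [map_sum, Nat.cast_smul_eq_nsmul, ← Finset.sum_const]
    exact Finset.sum_congr rfl fun g hg => by rw [← ContinuousLinearMap.comp_apply, hφ g hg]
  have := hfix _ fun a ha => apply_sum_apply_eq_of_mulClosed ρ hs hunit ha v
  rw [hsum] at this
  simpa [hne.card_ne_zero] using this

end Averaging

theorem fderiv_comp_eq_self_of_comp_eq_self {𝕜 E F : Type*} [NontriviallyNormedField 𝕜]
    [NormedAddCommGroup E] [NormedSpace 𝕜 E] [NormedAddCommGroup F] [NormedSpace 𝕜 F]
    {A : E →L[𝕜] E} (hA : IsUnit A) {f : E → F} (hf : f ∘ A = f) {x : E} (hx : A x = x) :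
    (fderiv 𝕜 f x).comp A = fderiv 𝕜 f x := by
  let e := ContinuousLinearEquiv.unitsEquiv 𝕜 E hA.unit
  have he : (e : E →L[𝕜] E) = A := rfl
  have he' : ⇑e = ⇑A := rfl
  have := e.comp_right_fderiv (f := f) (x := x)
  rwa [he', hf, hx, he, eq_comm] at this

theorem fderiv_eq_zero_of_fderiv_eq_zero_on_fixed {𝕜 E F M : Type*} [NontriviallyNormedField 𝕜]
    [CharZero 𝕜] [NormedAddCommGroup E] [NormedSpace 𝕜 E] [NormedAddCommGroup F]
    [NormedSpace 𝕜 F] [Monoid M] (ρ : M →* (E →L[𝕜] E)) {s : Finset M} (hne : s.Nonempty)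
    (hs : ∀ a ∈ s, ∀ b ∈ s, a * b ∈ s) (hunit : ∀ a ∈ s, IsUnit a) {f : E → F}
    (hf : ∀ a ∈ s, f ∘ ρ a = f) {x : E} (hx : ∀ a ∈ s, ρ a x = x)
    (hcrit : ∀ v, (∀ a ∈ s, ρ a v = v) → fderiv 𝕜 f x v = 0) :
    fderiv 𝕜 f x = 0 :=
  (fderiv 𝕜 f x).eq_zero_of_comp_eq_of_eq_zero_on_fixed ρ hne hs hunit
    (fun a ha => fderiv_comp_eq_self_of_comp_eq_self ((hunit a ha).map ρ) (hf a ha) (hx a ha))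
    hcrit

theorem stmt8_general (N : ℕ) (G : Finset (Matrix (Fin N) (Fin N) ℝ))
    (horth : ∀ g ∈ G, gᵀ * g = 1)
    (f : EuclideanSpace ℝ (Fin N) → ℝ)
    (hinvf : ∀ g ∈ G, ∀ x : EuclideanSpace ℝ (Fin N), f (actR g x) = f x)
    (H : Finset (Matrix (Fin N) (Fin N) ℝ)) (hHG : H ⊆ G)
    (hHone : (1 : Matrix (Fin N) (Fin N) ℝ) ∈ H)
    (hHmul : ∀ h ∈ H, ∀ h' ∈ H, h * h' ∈ H)
    (x : EuclideanSpace ℝ (Fin N)) (hx : ∀ h ∈ H, actR h x = x)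
    (hcrit : ∀ v : EuclideanSpace ℝ (Fin N), (∀ h ∈ H, actR h v = v) → fderiv ℝ f x v = 0) :
    fderiv ℝ f x = 0 := by
  let ρ : Matrix (Fin N) (Fin N) ℝ →* (EuclideanSpace ℝ (Fin N) →L[ℝ] EuclideanSpace ℝ (Fin N)) :=
    toEuclideanCLM (n := Fin N) (𝕜 := ℝ)
  -- `ρ g` is `actR g` by definition, so `hx` and `hcrit` apply as they stand.
  exact fderiv_eq_zero_of_fderiv_eq_zero_on_fixed ρ ⟨1, hHone⟩ hHmul
    (fun h hh => IsUnit.of_mul_eq_one_right _ (horth h (hHG hh)))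
    (fun h hh => funext (hinvf h (hHG hh))) hx hcrit

/-- **Principle of Symmetric Criticality, linear orthogonal setting.**
Let `G` be a finite subgroup of `O(N, ℝ)`, `f : ℝᴺ → ℝ` a differentiable `G`-invariant
function, and `H ≤ G` with fixed subspace `V^H`. If `x ∈ V^H` and `Df(x)` vanishes on
`V^H`, then `Df(x) = 0`. -/
theorem stmt8 (N : ℕ) (G : Finset (Matrix (Fin N) (Fin N) ℝ))
    (hone : (1 : Matrix (Fin N) (Fin N) ℝ) ∈ G)
    (hmul : ∀ g ∈ G, ∀ g' ∈ G, g * g' ∈ G)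
    (hinv : ∀ g ∈ G, ∃ g' ∈ G, g * g' = 1)
    (horth : ∀ g ∈ G, gᵀ * g = 1)
    (f : EuclideanSpace ℝ (Fin N) → ℝ)
    (hdiff : Differentiable ℝ f)
    (hinvf : ∀ g ∈ G, ∀ x : EuclideanSpace ℝ (Fin N), f (actR g x) = f x)
    (H : Finset (Matrix (Fin N) (Fin N) ℝ)) (hHG : H ⊆ G)
    (hHone : (1 : Matrix (Fin N) (Fin N) ℝ) ∈ H)
    (hHmul : ∀ h ∈ H, ∀ h' ∈ H, h * h' ∈ H)
    (x : EuclideanSpace ℝ (Fin N)) (hx : ∀ h ∈ H, actR h x = x)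
    (hcrit : ∀ v : EuclideanSpace ℝ (Fin N), (∀ h ∈ H, actR h v = v) → fderiv ℝ f x v = 0) :
    fderiv ℝ f x = 0 :=
  stmt8_general N G horth f hinvf H hHG hHone hHmul x hx hcrit
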